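/- arXiv:1109.0522 — 8 statements merged into one kernel-verified Lean document; each statement's English description precedes it below -/
import Mathlib

section
/- For k ≥ 1 and d ≥ 3, |L^(k)(S_d)| < d^k · 2^{k²/2}. -/
/-- A finite simple graph, bundled with its (finite) vertex type. -/
structure FGraph where
  V : Type
  [fin : Fintype V]
  G : SimpleGraph V

attribute [instance] FGraph.fin

/-- The line graph of a bundled finite graph. -/
noncomputable def FGraph.line (H : FGraph) : FGraph :=
  letI : Fintype H.G.edgeSet := Fintype.ofFinite _
  FGraph.mk H.G.edgeSet H.G.lineGraph

/-- The `k`-th iterated line graph. -/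
noncomputable def lineIter : ℕ → FGraph → FGraph
  | 0, H => H
  | (k + 1), H => (lineIter k H).line

/-- The star `S_d`: vertex `0` is the center, joined to `d` leaves. -/
def starGraph (d : ℕ) : SimpleGraph (Fin (d + 1)) :=
  SimpleGraph.fromRel (fun u _ => u = 0)

/-- The star `S_d`, as a bundled finite graph. -/
def starFG (d : ℕ) : FGraph := FGraph.mk (Fin (d + 1)) (starGraph d)

/-
Each edge `uv` of a graph with maximum degree at most `D` meets at most `2D` other edges (through
`u` or through `v`), so taking the line graph at most doubles the maximum degree, and by the
handshake lemma it multiplies the number of vertices by at most `D / 2`. Starting from `S_d`,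
which has `d` edges and maximum degree `d`, the `k`-th iterate has maximum degree at most `2^k d`,
hence `|L^(k+1)(S_d)| ≤ d^(k+1) 2^(0 + 1 + ⋯ + (k-1)) = d^(k+1) 2^(k choose 2)`, and
`k choose 2 < (k+1)^2 / 2`.
-/

namespace SimpleGraph

variable {V : Type*} {G : SimpleGraph V} {D : ℕ}

lemma card_lineGraph_neighborSet_le [Finite V] (hD : ∀ v, Nat.card (G.neighborSet v) ≤ D)
    (e : G.edgeSet) :
    Nat.card (G.lineGraph.neighborSet e) ≤ 2 * D := by
  classical
  obtain ⟨⟨u, v⟩, he⟩ := e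
  have mem_incidenceSet (f : G.lineGraph.neighborSet ⟨s(u, v), he⟩) :
      (f : Sym2 V) ∈ G.incidenceSet u ∪ G.incidenceSet v := by
    obtain ⟨-, w, hw, hwf⟩ := lineGraph_adj_iff_exists.mp f.2
    rcases Sym2.mem_iff.mp hw with rfl | rfl
    · exact Or.inl ⟨f.1.2, hwf⟩
    · exact Or.inr ⟨f.1.2, hwf⟩
  have card_incidenceSet (w : V) : (G.incidenceSet w).ncard ≤ D := by
    rw [← Nat.card_coe_set_eq, Nat.card_congr (G.incidenceSetEquivNeighborSet w)]
    exact hD w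
  calc Nat.card (G.lineGraph.neighborSet ⟨s(u, v), he⟩)
      ≤ Nat.card ↥(G.incidenceSet u ∪ G.incidenceSet v) :=
        Nat.card_le_card_of_injective (fun f => ⟨f, mem_incidenceSet f⟩)
          fun f g hfg => Subtype.val_injective (Subtype.val_injective (Subtype.mk.inj hfg))
    _ ≤ (G.incidenceSet u).ncard + (G.incidenceSet v).ncard := by
        rw [Nat.card_coe_set_eq]; exact Set.ncard_union_le _ _
    _ ≤ 2 * D := by linarith [card_incidenceSet u, card_incidenceSet v]

lemma two_mul_card_edgeSet_le [Finite V] (hD : ∀ v, Nat.card (G.neighborSet v) ≤ D) :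
    2 * Nat.card G.edgeSet ≤ Nat.card V * D := by
  classical
  have := Fintype.ofFinite V
  calc 2 * Nat.card G.edgeSet = ∑ v, G.degree v := by
        rw [sum_degrees_eq_twice_card_edges, Nat.card_eq_fintype_card, edgeFinset_card]
    _ ≤ ∑ _v : V, D := Finset.sum_le_sum fun v _ => by
        simpa only [Nat.card_eq_fintype_card, card_neighborSet_eq_degree] using hD v
    _ = Nat.card V * D := by simp

end SimpleGraph

lemma card_lineIter_neighborSet_le {H : FGraph} {D : ℕ}
    (hD : ∀ v, Nat.card (H.G.neighborSet v) ≤ D) (k : ℕ) (v : (lineIter k H).V) :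
    Nat.card ((lineIter k H).G.neighborSet v) ≤ 2 ^ k * D := by
  induction k with
  | zero => rw [pow_zero, one_mul]; exact hD v
  | succ k ih =>
    rw [pow_succ', mul_assoc]
    exact SimpleGraph.card_lineGraph_neighborSet_le ih v

lemma card_starGraph_neighborSet_le (d : ℕ) (v : Fin (d + 1)) :
    Nat.card ((starGraph d).neighborSet v) ≤ d := by
  classical
  rw [Nat.card_eq_fintype_card, SimpleGraph.card_neighborSet_eq_degree, ← Nat.lt_succ_iff]
  simpa using (starGraph d).degree_lt_card_verts v

lemma card_starGraph_edgeSet_le (d : ℕ) : Nat.card (starGraph d).edgeSet ≤ d := by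
  have edgeSet_subset : (starGraph d).edgeSet ⊆ (starGraph d).incidenceSet 0 := by
    rintro ⟨u, v⟩ he
    refine ⟨he, ?_⟩
    rcases ((starGraph d).mem_edgeSet.mp he).2 with rfl | rfl
    · exact Sym2.mem_mk_left _ _
    · exact Sym2.mem_mk_right _ _
  calc Nat.card (starGraph d).edgeSet
      ≤ Nat.card ((starGraph d).incidenceSet 0) := by
        simp only [Nat.card_coe_set_eq]; exact Set.ncard_le_ncard edgeSet_subset
    _ = Nat.card ((starGraph d).neighborSet 0) :=
        Nat.card_congr ((starGraph d).incidenceSetEquivNeighborSet 0)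
    _ ≤ d := card_starGraph_neighborSet_le d 0

lemma card_lineIter_succ_starFG_le (d k : ℕ) :
    Nat.card (lineIter (k + 1) (starFG d)).V ≤ d ^ (k + 1) * 2 ^ k.choose 2 := by
  induction k with
  | zero =>
    simp only [zero_add, pow_one, Nat.choose_zero_succ, pow_zero, mul_one]
    exact card_starGraph_edgeSet_le d
  | succ k ih =>
    have handshake := SimpleGraph.two_mul_card_edgeSet_le
      (card_lineIter_neighborSet_le (H := starFG d) (card_starGraph_neighborSet_le d) (k + 1))
    refine Nat.le_of_mul_le_mul_left ?_ two_pos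
    calc 2 * Nat.card (lineIter (k + 2) (starFG d)).V
        ≤ Nat.card (lineIter (k + 1) (starFG d)).V * (2 ^ (k + 1) * d) := handshake
      _ ≤ d ^ (k + 1) * 2 ^ k.choose 2 * (2 ^ (k + 1) * d) := Nat.mul_le_mul_right _ ih
      _ = 2 * (d ^ (k + 2) * 2 ^ (k + 1).choose 2) := by
        rw [Nat.choose_succ_succ', Nat.choose_one_right]; ring

/-- For `k ≥ 1` and `d ≥ 3`, `|L^(k)(S_d)| < d^k * 2^(k²/2)`. -/
theorem card_lineIter_star_lt (d k : ℕ) (hk : 1 ≤ k) (hd : 3 ≤ d) :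
    (Nat.card (lineIter k (starFG d)).V : ℝ) <
      (d : ℝ) ^ k * (2 : ℝ) ^ (((k : ℝ) ^ 2) / 2) := by
  obtain ⟨m, rfl⟩ := Nat.exists_eq_add_of_le' hk
  have choose_lt : (m.choose 2 : ℝ) < ((m + 1 : ℕ) : ℝ) ^ 2 / 2 := by
    calc (m.choose 2 : ℝ) ≤ (m : ℝ) ^ 2 / 2 := by
          simpa using Nat.choose_le_pow_div (α := ℝ) 2 m
      _ < ((m + 1 : ℕ) : ℝ) ^ 2 / 2 := by push_cast; gcongr; linarith
  have hd_pos : (0 : ℝ) < (d : ℝ) ^ (m + 1) := pow_pos (by exact_mod_cast (by omega : 0 < d)) _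
  calc (Nat.card (lineIter (m + 1) (starFG d)).V : ℝ)
        ≤ (d : ℝ) ^ (m + 1) * (2 : ℝ) ^ m.choose 2 := by
          exact_mod_cast card_lineIter_succ_starFG_le d m
    _ < (d : ℝ) ^ (m + 1) * (2 : ℝ) ^ (((m + 1 : ℕ) : ℝ) ^ 2 / 2) := by
        rw [← Real.rpow_natCast 2]
        exact mul_lt_mul_of_pos_left (Real.rpow_lt_rpow_of_exponent_lt one_lt_two choose_lt) hd_pos
end

section
/- For every integer t ≥ 1 and every 1 ≤ r ≤ t, the coefficient of n^r in the polynomial binomial(n, t) = n(n−1)⋯(n−t+1)/t! has absolute value at most 2^t / t. -/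
/-!
By Vieta, the coefficients of `∏ i < t, (X - i)` are signed elementary symmetric functions of
`0, 1, …, t - 1`, so each is bounded in absolute value by the sum of all of them,
`∏ i < t, (i + 1) = t!`. Hence every coefficient of `binomial(n, t)` has absolute value at most
`1 ≤ 2^t / t`.
-/

open Polynomial Finset Nat

section

variable {ι R : Type*} [CommRing R] [LinearOrder R] [IsStrictOrderedRing R]

theorem abs_coeff_prod_X_add_C_le (s : Finset ι) (f : ι → R) (k : ℕ) :
    |(∏ i ∈ s, (X + C (f i))).coeff k| ≤ ∏ i ∈ s, (|f i| + 1) := by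
  rcases le_or_gt k #s with hk | hk
  · rw [prod_X_add_C_coeff s f hk, prod_add_one]
    calc |∑ u ∈ s.powersetCard (#s - k), ∏ i ∈ u, f i|
        ≤ ∑ u ∈ s.powersetCard (#s - k), ∏ i ∈ u, |f i| :=
          (abs_sum_le_sum_abs _ _).trans_eq <| by simp only [abs_prod]
      _ ≤ ∑ u ∈ s.powerset, ∏ i ∈ u, |f i| :=
          sum_le_sum_of_subset_of_nonneg (fun u hu ↦ mem_powerset.2 (mem_powersetCard.1 hu).1)
            fun u _ _ ↦ prod_nonneg fun i _ ↦ abs_nonneg (f i)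
  · rw [coeff_eq_zero_of_natDegree_lt, abs_zero]
    · exact prod_nonneg fun i _ ↦ by positivity
    · exact (natDegree_prod_le _ _).trans_lt <| by simpa using hk

theorem abs_coeff_prod_X_sub_C_le (s : Finset ι) (f : ι → R) (k : ℕ) :
    |(∏ i ∈ s, (X - C (f i))).coeff k| ≤ ∏ i ∈ s, (|f i| + 1) := by
  simpa only [sub_eq_add_neg, ← map_neg, abs_neg] using
    abs_coeff_prod_X_add_C_le s (fun i ↦ -f i) k

theorem abs_coeff_prod_range_X_sub_natCast_le_factorial (t k : ℕ) :
    |(∏ i ∈ range t, (X - C (i : R))).coeff k| ≤ (t ! : R) := by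
  refine (abs_coeff_prod_X_sub_C_le _ _ k).trans_eq ?_
  simp only [Nat.abs_cast]
  exact_mod_cast prod_range_add_one_eq_factorial t

end

theorem coeff_binomial_poly_bound_general (t : ℕ) :
    ∀ r : ℕ, 1 ≤ r → r ≤ t →
      |(((t.factorial : ℚ)⁻¹ • ∏ i ∈ Finset.range t, ((X : ℚ[X]) - C (i : ℚ))).coeff r)| ≤
        (2 : ℚ) ^ t / (t : ℚ) := by
  intro r hr1 hrt
  have ht : (0 : ℚ) < t := by exact_mod_cast hr1.trans hrt
  have hfac : (0 : ℚ) < t ! := by exact_mod_cast t.factorial_pos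
  calc |((t ! : ℚ)⁻¹ • ∏ i ∈ range t, ((X : ℚ[X]) - C (i : ℚ))).coeff r|
      = (t ! : ℚ)⁻¹ * |(∏ i ∈ range t, ((X : ℚ[X]) - C (i : ℚ))).coeff r| := by
        rw [coeff_smul, smul_eq_mul, abs_mul, abs_inv, abs_of_pos hfac]
    _ ≤ (t ! : ℚ)⁻¹ * t ! := by
        gcongr; exact abs_coeff_prod_range_X_sub_natCast_le_factorial t r
    _ = 1 := inv_mul_cancel₀ hfac.ne'
    _ ≤ 2 ^ t / t := by
        rw [le_div_iff₀ ht, one_mul]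
        exact_mod_cast t.lt_two_pow_self.le

/-- Every coefficient of `n^r` (for `1 ≤ r ≤ t`) in the polynomial
`binomial(n, t) = n(n-1)⋯(n-t+1)/t!` has absolute value at most `2^t / t`. -/
theorem coeff_binomial_poly_bound (t : ℕ) (ht : 1 ≤ t) :
    ∀ r : ℕ, 1 ≤ r → r ≤ t →
      |(((t.factorial : ℚ)⁻¹ • ∏ i ∈ Finset.range t, ((X : ℚ[X]) - C (i : ℚ))).coeff r)| ≤
        (2 : ℚ) ^ t / (t : ℚ) :=
  coeff_binomial_poly_bound_general t
end

section
/- The number of paths of length at most k in the line-graph iteration tree is bounded: for any graph H and any vertex v of L^(k)(H), the shadow of v contains at most k+1 vertices of H, i.e., |Sh(v)| ≤ k + 1. -/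
/-- The shadow of a vertex of the `k`-th iterated line graph: the set of vertices of the
base graph appearing at the leaves of the recursive pair structure. -/
def Sh : (k : ℕ) → (H : FGraph) → (lineIter k H).V → Set H.V
  | 0, _, v => {v}
  | (k + 1), H, v =>
      {x | ∃ A : (lineIter k H).V,
        A ∈ ((show (lineIter k H).G.edgeSet from v : _) : Sym2 (lineIter k H).V) ∧ x ∈ Sh k H A}

/-!
A vertex of `L^(k+1)(H)` is an edge of `L^k(H)`, and consecutive vertices of a walk in a line
graph are edges sharing an endpoint. Hence a walk in the line graph of `G` lifts to a walk in `G`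
whose vertex set is the union of the visited edges, and each new edge contributes at most one new
vertex, so this union has at most one more element than the walk has vertices. Inducting on `k`
for whole walks instead of single vertices, the shadows along a walk of `L^k(H)` through `n`
vertices cover at most `n + k` vertices of `H`; the trivial walk at `v` gives the bound.
-/

namespace SimpleGraph

variable {V : Type*} {G : SimpleGraph V}

lemma exists_walk_support_eq_pair {x y z : V} (h : G.Adj x y) (hz : z ∈ s(x, y)) :
    ∃ p : G.Walk x z, {v | v ∈ p.support} = {x, y} := by
  rcases Sym2.mem_iff.mp hz with rfl | rfl
  · exact ⟨.cons h (.cons h.symm .nil), by ext; simp; tauto⟩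
  · exact ⟨.cons h .nil, by ext; simp⟩

lemma exists_adj_of_mem_edge {e : G.edgeSet} {x : V} (hx : x ∈ (e : Sym2 V)) :
    ∃ y, G.Adj x y ∧ (e : Sym2 V) = s(x, y) := by
  obtain ⟨y, hy⟩ := Sym2.mem_iff_exists.mp hx
  exact ⟨y, G.mem_edgeSet.mp (hy ▸ e.2), hy⟩

namespace Walk

lemma setOf_mem_support_cons {u v w : V} (h : G.Adj u v) (p : G.Walk v w) :
    {x | x ∈ (cons h p).support} = insert u {x | x ∈ p.support} := by
  ext; simp

lemma biUnion_support_cons {α : Type*} {u v w : V} (h : G.Adj u v) (p : G.Walk v w)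
    (f : V → Set α) : ⋃ x ∈ (cons h p).support, f x = f u ∪ ⋃ x ∈ p.support, f x := by
  simp only [support_cons, List.mem_cons, Set.iUnion_or, Set.iUnion_union_distrib,
    Set.iUnion_iUnion_eq_left]

lemma exists_walk_support_eq_biUnion_of_lineGraph {e f : G.edgeSet}
    (w : G.lineGraph.Walk e f) {x : V} (hx : x ∈ (e : Sym2 V)) :
    ∃ (u : V) (w' : G.Walk x u),
      {v | v ∈ w'.support} = ⋃ d ∈ w.support, ((d : Sym2 V) : Set V) := by
  induction w generalizing x with
  | nil =>
    obtain ⟨y, hxy, he⟩ := exists_adj_of_mem_edge hx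
    obtain ⟨p, hp⟩ := exists_walk_support_eq_pair hxy (Sym2.mem_mk_left x y)
    exact ⟨x, p, by simp [hp, he]⟩
  | @cons e f g h w ih =>
    obtain ⟨-, z, hze, hzf⟩ := lineGraph_adj_iff_exists.mp h
    obtain ⟨u, w', hw'⟩ := ih hzf
    obtain ⟨y, hxy, he⟩ := exists_adj_of_mem_edge hx
    obtain ⟨p, hp⟩ := exists_walk_support_eq_pair hxy (he ▸ hze)
    refine ⟨u, p.append w', ?_⟩
    have hsupp :
        {v | v ∈ (p.append w').support} = {v | v ∈ p.support} ∪ {v | v ∈ w'.support} := by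
      ext; simp [mem_support_append_iff]
    rw [biUnion_support_cons, hsupp, hp, hw', he, Sym2.coe_mk]

lemma ncard_biUnion_support_le_of_lineGraph {e f : G.edgeSet} (w : G.lineGraph.Walk e f) :
    (⋃ d ∈ w.support, ((d : Sym2 V) : Set V)).ncard ≤ {d | d ∈ w.support}.ncard + 1 := by
  induction w with
  | @nil e =>
    obtain ⟨⟨x, y⟩, -⟩ := e
    simpa using Set.ncard_insert_le x {y}
  | @cons e f g h w ih =>
    rw [biUnion_support_cons, setOf_mem_support_cons]
    by_cases hew : e ∈ w.support
    · have hsub : ((e : Sym2 V) : Set V) ⊆ ⋃ d ∈ w.support, ((d : Sym2 V) : Set V) :=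
        fun _ hx ↦ Set.mem_biUnion hew hx
      rwa [Set.union_eq_right.mpr hsub, Set.insert_eq_of_mem (s := {d | d ∈ w.support}) hew]
    obtain ⟨-, z, hze, hzf⟩ := lineGraph_adj_iff_exists.mp h
    obtain ⟨y, -, he⟩ := exists_adj_of_mem_edge hze
    have hz : z ∈ ⋃ d ∈ w.support, ((d : Sym2 V) : Set V) :=
      Set.mem_biUnion w.start_mem_support hzf
    rw [he, Sym2.coe_mk, Set.insert_union, Set.singleton_union,
      Set.insert_eq_of_mem (Set.mem_insert_of_mem _ hz),
      Set.ncard_insert_of_notMem (s := {d | d ∈ w.support}) hew (List.finite_toSet _)]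
    have := Set.ncard_insert_le y (⋃ d ∈ w.support, ((d : Sym2 V) : Set V))
    omega

end Walk

end SimpleGraph

lemma ncard_biUnion_Sh_support_le (H : FGraph) :
    ∀ (k : ℕ) {a b : (lineIter k H).V} (w : (lineIter k H).G.Walk a b),
      (⋃ v ∈ w.support, Sh k H v).ncard ≤ {v | v ∈ w.support}.ncard + k
  | 0, _, _, w => (congrArg Set.ncard (Set.biUnion_of_singleton {v | v ∈ w.support})).le
  | k + 1, a, b, w => by
    let w₁ : (lineIter k H).G.lineGraph.Walk a b := w
    obtain ⟨u, w', hw'⟩ :=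
      SimpleGraph.Walk.exists_walk_support_eq_biUnion_of_lineGraph w₁ (Sym2.out_fst_mem _)
    have hSh : ⋃ v ∈ w.support, Sh (k + 1) H v = ⋃ A ∈ w'.support, Sh k H A := by
      ext t
      have hmem := Set.ext_iff.mp hw'
      simp only [Set.mem_iUnion, Set.mem_ofPred_eq, exists_prop] at hmem ⊢
      constructor
      · rintro ⟨v, hv, A, hAv, ht⟩
        exact ⟨A, (hmem A).2 ⟨v, hv, hAv⟩, ht⟩
      · rintro ⟨A, hA, ht⟩
        obtain ⟨v, hv, hAv⟩ := (hmem A).1 hA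
        exact ⟨v, hv, A, hAv, ht⟩
    have hU := SimpleGraph.Walk.ncard_biUnion_support_le_of_lineGraph w₁
    rw [← hw'] at hU
    have ih := ncard_biUnion_Sh_support_le H k w'
    rw [hSh]
    change _ ≤ {v | v ∈ w₁.support}.ncard + (k + 1)
    omega

/-- For any graph `H` and any vertex `v` of `L^(k)(H)`, the shadow of `v` contains at most
`k + 1` vertices of `H`. -/
theorem shadow_card_le (H : FGraph) (k : ℕ) (v : (lineIter k H).V) :
    (Sh k H v).ncard ≤ k + 1 := by
  simpa [add_comm] using ncard_biUnion_Sh_support_le H k (.nil : (lineIter k H).G.Walk v v)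
end

section
/- If v = {A, B} is a vertex of L^(t)(G) for t ≥ 1 with child A, then |Sh(v) \ Sh(A)| ≤ 1. -/
/-!
The shadow of a vertex `s(A, B)` is `Sh A ∪ Sh B`, so it suffices to show that adjacent vertices
`A`, `B` of `L^(k)(G)` satisfy `|Sh B \ Sh A| ≤ 1`. This goes by induction on `k`: adjacent
vertices of a line graph share an endpoint `C`, and writing `B = s(C, D)` with `C ~ D`, we get
`Sh B \ Sh A ⊆ (Sh C ∪ Sh D) \ Sh C = Sh D \ Sh C`.
-/

theorem SimpleGraph.exists_adj_of_mem_edge_s7 {V : Type*} {G : SimpleGraph V} (e : G.edgeSet)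
    {a : V} (ha : a ∈ (e : Sym2 V)) : ∃ b, G.Adj a b ∧ (e : Sym2 V) = s(a, b) := by
  obtain ⟨b, he⟩ := Sym2.mem_iff_exists.mp ha
  exact ⟨b, G.mem_edgeSet.mp (he ▸ e.2), he⟩

namespace Sh

variable {G : FGraph} {k : ℕ}

theorem subset_of_mem {v : (lineIter (k + 1) G).V} {C : (lineIter k G).V}
    (hC : C ∈ ((show (lineIter k G).G.edgeSet from v : _) : Sym2 (lineIter k G).V)) :
    Sh k G C ⊆ Sh (k + 1) G v :=
  fun _ hx => ⟨C, hC, hx⟩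

theorem succ_eq_union {v : (lineIter (k + 1) G).V} {A B : (lineIter k G).V}
    (hv : ((show (lineIter k G).G.edgeSet from v : _) : Sym2 (lineIter k G).V) = s(A, B)) :
    Sh (k + 1) G v = Sh k G A ∪ Sh k G B := by
  ext x
  simp only [Sh, hv, Sym2.mem_iff, Set.mem_ofPred_eq, Set.mem_union, or_and_right, exists_or,
    exists_eq_left]

theorem ncard_diff_le_one_of_adj :
    ∀ {k : ℕ} {A B : (lineIter k G).V}, (lineIter k G).G.Adj A B → (Sh k G B \ Sh k G A).ncard ≤ 1
  | 0, A, B, _ => by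
    calc (Sh 0 G B \ Sh 0 G A).ncard ≤ ({B} : Set G.V).ncard :=
          Set.ncard_le_ncard Set.sdiff_subset (Set.toFinite _)
      _ = 1 := Set.ncard_singleton B
  | k + 1, A, B, hAB => by
    obtain ⟨-, C, hCA, hCB⟩ := SimpleGraph.lineGraph_adj_iff_exists.mp hAB
    obtain ⟨D, hCD, hB⟩ := SimpleGraph.exists_adj_of_mem_edge_s7 _ hCB
    calc (Sh (k + 1) G B \ Sh (k + 1) G A).ncard
        ≤ ((Sh k G C ∪ Sh k G D) \ Sh k G C).ncard := by
          rw [succ_eq_union hB]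
          exact Set.ncard_le_ncard (Set.sdiff_subset_sdiff_right (subset_of_mem hCA))
            (Set.toFinite _)
      _ = (Sh k G D \ Sh k G C).ncard := by rw [Set.union_sdiff_left]
      _ ≤ 1 := ncard_diff_le_one_of_adj hCD

end Sh

/-- If `v` is a vertex of `L^(t)(G)` with `t ≥ 1` (so `v` is an unordered pair of vertices of
`L^(t-1)(G)`) and `A` is a child of `v`, then `|Sh(v) \ Sh(A)| ≤ 1`. -/
theorem shadow_child_diff (G : FGraph) (k : ℕ) (v : (lineIter (k + 1) G).V)
    (A : (lineIter k G).V)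
    (hA : A ∈ ((show (lineIter k G).G.edgeSet from v : _) : Sym2 (lineIter k G).V)) :
    (Sh (k + 1) G v \ Sh k G A).ncard ≤ 1 := by
  obtain ⟨B, hAB, hv⟩ := SimpleGraph.exists_adj_of_mem_edge_s7 _ hA
  rw [Sh.succ_eq_union hv, Set.union_sdiff_left]
  exact Sh.ncard_diff_le_one_of_adj hAB
end

section
/- Let T_k ⊆ {0,…,2^k−1} be the set of integers whose binary digit sum is odd, and T̄_k = {0,…,2^k−1} \ T_k. Then for every 0 ≤ j < k, the j-th power sums agree: ∑_{x∈T_k} x^j = ∑_{x∈T̄_k} x^j. -/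
/-!
Write `ε(x) = (-1)^{s₂(x)}` for the Thue–Morse sign, so that the claim is
`∑_{x < 2^k} ε(x) x^j = 0`. For `x < 2^k` the number `x + 2^k` has one more binary digit `1`, so `ε(x + 2^k) = -ε(x)`, and the
signed sum of `p` over `[0, 2^{k+1})` is the signed sum over `[0, 2^k)` of `p(x) - p(x + 2^k)`,
a polynomial of smaller degree. By induction on `k`, the signed sum over `[0, 2^k)` kills every
polynomial of degree `< k`.
-/

/-- The odious numbers in `{0, …, 2^k - 1}`: those with an odd binary digit sum. -/
def odious (k : ℕ) : Finset ℕ :=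
  (Finset.range (2 ^ k)).filter (fun x => Odd ((Nat.digits 2 x).sum))

/-- The evil numbers in `{0, …, 2^k - 1}`: those with an even binary digit sum. -/
def evil (k : ℕ) : Finset ℕ :=
  (Finset.range (2 ^ k)).filter (fun x => Even ((Nat.digits 2 x).sum))

open Finset Polynomial

theorem Nat.digits_sum_add_base_pow {b k x : ℕ} (hb : 1 < b) (hx : x < b ^ k) :
    (b.digits (x + b ^ k)).sum = (b.digits x).sum + 1 := by
  have h := digits_append_zeroes_append_digits (k := k - (b.digits x).length) (m := 1) (n := x)
    hb one_pos
  rw [Nat.add_sub_cancel' ((digits_length_le_iff hb x).2 hx), mul_one] at h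
  simp [← h, digits_of_lt b 1 one_ne_zero hb]

def thueMorseSign (R : Type*) [Ring R] (x : ℕ) : R :=
  (-1) ^ (Nat.digits 2 x).sum

section

variable {R : Type*}

theorem thueMorseSign_add_two_pow [Ring R] {k x : ℕ} (hx : x < 2 ^ k) :
    thueMorseSign R (x + 2 ^ k) = -thueMorseSign R x := by
  rw [thueMorseSign, thueMorseSign, Nat.digits_sum_add_base_pow one_lt_two hx, pow_succ,
    mul_neg_one]

theorem sum_range_two_pow_succ_thueMorseSign_mul [Ring R] (k : ℕ) (f : ℕ → R) :
    ∑ x ∈ range (2 ^ (k + 1)), thueMorseSign R x * f x =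
      ∑ x ∈ range (2 ^ k), thueMorseSign R x * (f x - f (x + 2 ^ k)) := by
  rw [pow_succ, mul_two, sum_range_add, ← sum_add_distrib]
  refine sum_congr rfl fun x hx => ?_
  rw [add_comm (2 ^ k) x, thueMorseSign_add_two_pow (mem_range.1 hx), neg_mul, mul_sub,
    sub_eq_add_neg]

theorem sum_range_two_pow_thueMorseSign_mul_eval_eq_zero [CommRing R] {k : ℕ} {p : R[X]}
    (hp : p.degree < k) : ∑ x ∈ range (2 ^ k), thueMorseSign R x * p.eval (x : R) = 0 := by
  induction k generalizing p with
  | zero =>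
    rw [degree_eq_bot.1 (Nat.WithBot.lt_zero_iff.1 hp)]
    simp
  | succ k ih =>
    rw [sum_range_two_pow_succ_thueMorseSign_mul]
    have hdiff : (p - taylor (2 ^ k : R) p).degree < k := by
      rcases eq_or_ne p 0 with rfl | hp0
      · simp
      calc (p - taylor (2 ^ k : R) p).degree
          < p.degree :=
            degree_sub_lt_left (degree_taylor p _).symm hp0 (leadingCoeff_taylor _ _).symm
        _ ≤ k := Order.le_of_lt_succ (by exact_mod_cast hp)
    simpa [taylor_eval] using ih hdiff

end

theorem range_sdiff_odious (k : ℕ) : range (2 ^ k) \ odious k = evil k := by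
  rw [odious, ← filter_not, evil]
  simp only [Nat.not_odd_iff_even]

/-- Prouhet's solution of the Prouhet–Tarry–Escott problem: for every `j < k`, the `j`-th
power sums of the odious and the evil numbers below `2^k` agree. -/
theorem prouhet_tarry_escott (k j : ℕ) (hj : j < k) :
    ∑ x ∈ odious k, x ^ j = ∑ x ∈ Finset.range (2 ^ k) \ odious k, x ^ j := by
  have hsigned := sum_range_two_pow_thueMorseSign_mul_eval_eq_zero (R := ℤ) (p := X ^ j)
    ((degree_X_pow_le j).trans_lt (by exact_mod_cast hj))
  rw [← sum_filter_add_sum_filter_not _ (fun x => Odd (Nat.digits 2 x).sum), filter_not, ← odious,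
    range_sdiff_odious] at hsigned
  have hodious : ∀ x ∈ odious k, thueMorseSign ℤ x * eval (x : ℤ) (X ^ j) = -(x : ℤ) ^ j :=
    fun x hx => by
      rw [thueMorseSign, (mem_filter.1 hx).2.neg_one_pow, eval_pow, eval_X, neg_one_mul]
  have hevil : ∀ x ∈ evil k, thueMorseSign ℤ x * eval (x : ℤ) (X ^ j) = (x : ℤ) ^ j :=
    fun x hx => by
      rw [thueMorseSign, (mem_filter.1 hx).2.neg_one_pow, eval_pow, eval_X, one_mul]
  rw [sum_congr rfl hodious, sum_congr rfl hevil, sum_neg_distrib] at hsigned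
  rw [range_sdiff_odious]
  exact_mod_cast neg_add_eq_zero.1 hsigned
end

section
/- With T_k the odious numbers and T̄_k the evil numbers in {0,…,2^k−1}, for k ≥ 1 one has ∑_{x∈T_k} x^k − ∑_{x∈T̄_k} x^k = (−1)^{k+1} · k! · 2^{k(k−1)/2}. -/
open Finset

theorem Nat.digits_sum_add_pow_mul {b k x : ℕ} (hb : 1 < b) (hx : x < b ^ k) (m : ℕ) :
    (b.digits (x + b ^ k * m)).sum = (b.digits x).sum + (b.digits m).sum := by
  rcases m.eq_zero_or_pos with rfl | hm
  · simp
  have hlen : (b.digits x).length ≤ k := (Nat.digits_length_le_iff hb x).2 hx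
  rw [← Nat.add_sub_cancel' hlen, ← Nat.digits_append_zeroes_append_digits hb hm]
  simp

theorem Finset.sum_range_two_pow_succ {M : Type*} [AddCommMonoid M] (f : ℕ → M) (k : ℕ) :
    ∑ x ∈ range (2 ^ (k + 1)), f x =
      ∑ x ∈ range (2 ^ k), f x + ∑ x ∈ range (2 ^ k), f (2 ^ k + x) := by
  rw [pow_succ, mul_two, sum_range_add]

noncomputable def signedPowerSum (k n : ℕ) : ℤ :=
  ∑ x ∈ range (2 ^ k), (-1) ^ (Nat.digits 2 x).sum * (x : ℤ) ^ n

theorem signedPowerSum_succ (k n : ℕ) :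
    signedPowerSum (k + 1) n =
      -∑ j ∈ range n, (n.choose j : ℤ) * 2 ^ (k * (n - j)) * signedPowerSum k j := by
  have hupper : ∀ x ∈ range (2 ^ k),
      (-1) ^ (Nat.digits 2 (2 ^ k + x)).sum * ((2 ^ k + x : ℕ) : ℤ) ^ n =
        -∑ j ∈ range (n + 1), (n.choose j : ℤ) * 2 ^ (k * (n - j)) *
          ((-1) ^ (Nat.digits 2 x).sum * (x : ℤ) ^ j) := by
    intro x hx
    have hdigitSum : (Nat.digits 2 (x + 2 ^ k)).sum = (Nat.digits 2 x).sum + 1 := by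
      simpa using Nat.digits_sum_add_pow_mul one_lt_two (mem_range.1 hx) 1
    rw [add_comm, hdigitSum, Nat.cast_add, add_pow, mul_sum, ← sum_neg_distrib]
    refine sum_congr rfl fun j _ => ?_
    push_cast [pow_mul]
    ring
  rw [signedPowerSum, sum_range_two_pow_succ, sum_congr rfl hupper, sum_neg_distrib, sum_comm,
    sum_range_succ]
  simp only [← mul_sum, Nat.choose_self, Nat.sub_self, mul_zero, pow_zero, signedPowerSum]
  ring

theorem signedPowerSum_eq_zero_of_lt {k n : ℕ} (h : n < k) : signedPowerSum k n = 0 := by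
  induction k generalizing n with
  | zero => exact absurd h n.not_lt_zero
  | succ k ih =>
    rw [signedPowerSum_succ, sum_eq_zero fun j hj => by
      rw [ih (by have := mem_range.1 hj; omega), mul_zero], neg_zero]

theorem signedPowerSum_self (k : ℕ) :
    signedPowerSum k k = (-1) ^ k * k.factorial * 2 ^ k.choose 2 := by
  induction k with
  | zero => simp [signedPowerSum]
  | succ k ih =>
    rw [signedPowerSum_succ, sum_range_succ,
      sum_eq_zero fun j hj => by rw [signedPowerSum_eq_zero_of_lt (mem_range.1 hj), mul_zero],
      zero_add, ih, Nat.choose_succ_self_right, Nat.add_sub_cancel_left, Nat.choose_succ_succ',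
      Nat.choose_one_right, Nat.factorial_succ]
    push_cast
    ring

theorem signedPowerSum_eq_sum_evil_sub_sum_odious (k n : ℕ) :
    signedPowerSum k n = ∑ x ∈ evil k, (x : ℤ) ^ n - ∑ x ∈ odious k, (x : ℤ) ^ n := by
  rw [signedPowerSum, evil, odious,
    ← sum_filter_add_sum_filter_not _ (fun x => Even (Nat.digits 2 x).sum)]
  simp only [Nat.not_even_iff_odd]
  rw [sub_eq_add_neg, ← sum_neg_distrib]
  congr 1 <;> refine sum_congr rfl fun x hx => ?_
  · rw [(mem_filter.1 hx).2.neg_one_pow, one_mul]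
  · rw [(mem_filter.1 hx).2.neg_one_pow, neg_one_mul]

theorem powerSum_diff_eq_general (k : ℕ) :
    (∑ x ∈ odious k, (x : ℤ) ^ k) - ∑ x ∈ evil k, (x : ℤ) ^ k =
      (-1) ^ (k + 1) * (k.factorial : ℤ) * 2 ^ (k * (k - 1) / 2) := by
  rw [← Nat.choose_two_right, ← neg_sub, ← signedPowerSum_eq_sum_evil_sub_sum_odious,
    signedPowerSum_self]
  ring

/-- `S_k(T_k) - S_k(T̄_k) = (-1)^(k+1) k! 2^(k(k-1)/2)` for `k ≥ 1`. -/
theorem powerSum_diff_eq (k : ℕ) (hk : 1 ≤ k) :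
    (∑ x ∈ odious k, (x : ℤ) ^ k) - ∑ x ∈ evil k, (x : ℤ) ^ k =
      (-1) ^ (k + 1) * (k.factorial : ℤ) * 2 ^ (k * (k - 1) / 2) :=
  powerSum_diff_eq_general k
end

section
/- Let f be a polynomial of degree d ≥ k ≥ 1. Then there is a polynomial g of degree d − k such that for all t, ∑_{x∈T_k} f(x+t) − ∑_{x∈T̄_k} f(x+t) = g(t); moreover if C is the leading coefficient of f, the leading coefficient of g is (−1)^{k+1} C · binomial(d,k) · k! · 2^{k(k−1)/2}. -/
open Polynomial

theorem Nat.digits_sum_two_pow_add {k x : ℕ} (hx : x < 2 ^ k) :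
    (Nat.digits 2 (2 ^ k + x)).sum = (Nat.digits 2 x).sum + 1 := by
  have hlen : (Nat.digits 2 x).length ≤ k := (Nat.digits_length_le_iff one_lt_two x).2 hx
  have happend := Nat.digits_append_zeroes_append_digits (b := 2) (k := k - (Nat.digits 2 x).length)
    (n := x) one_lt_two one_pos
  rw [Nat.add_sub_cancel' hlen, mul_one, add_comm x] at happend
  rw [← happend]
  simp

namespace Polynomial

variable {R : Type*} [CommRing R]

noncomputable def shiftDiff (c : R) (p : R[X]) : R[X] := taylor c p - p

theorem eval_shiftDiff (c : R) (p : R[X]) (t : R) :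
    (shiftDiff c p).eval t = p.eval (t + c) - p.eval t := by
  rw [shiftDiff, eval_sub, taylor_eval]

theorem natDegree_shiftDiff_le (c : R) (p : R[X]) :
    (shiftDiff c p).natDegree ≤ p.natDegree - 1 := by
  rw [natDegree_le_iff_coeff_eq_zero]
  intro m hm
  rcases (show p.natDegree ≤ m by omega).eq_or_lt with rfl | hlt
  · rw [shiftDiff, coeff_sub, coeff_taylor_natDegree, coeff_natDegree, sub_self]
  · rw [shiftDiff, coeff_sub, coeff_eq_zero_of_natDegree_lt (by rwa [natDegree_taylor]),
      coeff_eq_zero_of_natDegree_lt hlt, sub_self]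

theorem coeff_shiftDiff_natDegree_sub_one (c : R) {p : R[X]} (hp : 0 < p.natDegree) :
    (shiftDiff c p).coeff (p.natDegree - 1) = p.natDegree * c * p.leadingCoeff := by
  set n := p.natDegree
  have hlin : (hasseDeriv (n - 1) p).natDegree < 2 := by
    have := natDegree_hasseDeriv_le p (n - 1)
    omega
  rw [shiftDiff, coeff_sub, taylor_coeff, eval_eq_sum_range' hlin, Finset.sum_range_succ,
    Finset.sum_range_one, hasseDeriv_coeff, hasseDeriv_coeff, zero_add, Nat.choose_self,
    Nat.add_sub_cancel' hp, Nat.choose_symm hp, Nat.choose_one_right, leadingCoeff]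
  push_cast
  ring

noncomputable def dyadicDiff (p : R[X]) : ℕ → R[X]
  | 0 => p
  | k + 1 => shiftDiff (2 ^ k) (dyadicDiff p k)

section CharZero

variable [IsDomain R] [CharZero R] {c : R} {p : R[X]} {k : ℕ}

theorem natDegree_shiftDiff (hc : c ≠ 0) (hp : 0 < p.natDegree) :
    (shiftDiff c p).natDegree = p.natDegree - 1 := by
  refine (natDegree_shiftDiff_le c p).antisymm (le_natDegree_of_ne_zero ?_)
  rw [coeff_shiftDiff_natDegree_sub_one c hp]
  have hp0 : p ≠ 0 := ne_zero_of_natDegree_gt hp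
  exact mul_ne_zero (mul_ne_zero (Nat.cast_ne_zero.2 hp.ne') hc) (leadingCoeff_ne_zero.2 hp0)

theorem leadingCoeff_shiftDiff (hc : c ≠ 0) (hp : 0 < p.natDegree) :
    (shiftDiff c p).leadingCoeff = p.natDegree * c * p.leadingCoeff := by
  rw [leadingCoeff, natDegree_shiftDiff hc hp, coeff_shiftDiff_natDegree_sub_one c hp]

theorem natDegree_dyadicDiff (hk : k ≤ p.natDegree) :
    (dyadicDiff p k).natDegree = p.natDegree - k := by
  induction k with
  | zero => rfl
  | succ k ih =>
    rw [dyadicDiff, natDegree_shiftDiff (pow_ne_zero _ two_ne_zero) (by omega), ih (by omega)]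
    omega

theorem leadingCoeff_dyadicDiff (hk : k ≤ p.natDegree) :
    (dyadicDiff p k).leadingCoeff =
      p.leadingCoeff * p.natDegree.descFactorial k * 2 ^ k.choose 2 := by
  induction k with
  | zero => simp [dyadicDiff]
  | succ k ih =>
    have hdeg := natDegree_dyadicDiff (p := p) (k := k) (by omega)
    rw [dyadicDiff, leadingCoeff_shiftDiff (pow_ne_zero _ two_ne_zero) (by omega), ih (by omega),
      hdeg, Nat.descFactorial_succ, Nat.choose_succ_succ', Nat.choose_one_right, pow_add]
    push_cast
    ring

end CharZero

theorem sum_range_two_pow_neg_one_pow_digits_sum_mul_eval (p : R[X]) (k : ℕ) (t : R) :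
    ∑ x ∈ Finset.range (2 ^ k), (-1) ^ (Nat.digits 2 x).sum * p.eval (x + t) =
      (-1) ^ k * (dyadicDiff p k).eval t := by
  induction k generalizing t with
  | zero => simp [dyadicDiff]
  | succ k ih =>
    have hupper : ∀ x ∈ Finset.range (2 ^ k),
        (-1) ^ (Nat.digits 2 (2 ^ k + x)).sum * p.eval ((2 ^ k + x : ℕ) + t) =
          -((-1) ^ (Nat.digits 2 x).sum * p.eval (x + (t + 2 ^ k))) := by
      intro x hx
      rw [Nat.digits_sum_two_pow_add (Finset.mem_range.1 hx)]
      push_cast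
      ring_nf
    rw [pow_succ, mul_two, Finset.sum_range_add, Finset.sum_congr rfl hupper,
      Finset.sum_neg_distrib, ih, ih, dyadicDiff, eval_shiftDiff]
    ring

end Polynomial

theorem sum_odious_sub_sum_evil {R : Type*} [Ring R] (k : ℕ) (h : ℕ → R) :
    ∑ x ∈ odious k, h x - ∑ x ∈ evil k, h x =
      -∑ x ∈ Finset.range (2 ^ k), (-1) ^ (Nat.digits 2 x).sum * h x := by
  have hevil : evil k = (Finset.range (2 ^ k)).filter (fun x => ¬Odd (Nat.digits 2 x).sum) := by
    simp only [evil, Nat.not_odd_iff_even]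
  have hsplit := Finset.sum_filter_add_sum_filter_not (Finset.range (2 ^ k))
    (fun x => Odd (Nat.digits 2 x).sum) (fun x => (-1 : R) ^ (Nat.digits 2 x).sum * h x)
  have hsum_odious :
      ∑ x ∈ odious k, (-1 : R) ^ (Nat.digits 2 x).sum * h x = -∑ x ∈ odious k, h x := by
    rw [← Finset.sum_neg_distrib]
    exact Finset.sum_congr rfl fun x hx => by
      rw [(Finset.mem_filter.1 hx).2.neg_one_pow, neg_one_mul]
  have hsum_evil : ∑ x ∈ evil k, (-1 : R) ^ (Nat.digits 2 x).sum * h x = ∑ x ∈ evil k, h x :=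
    Finset.sum_congr rfl fun x hx => by rw [(Finset.mem_filter.1 hx).2.neg_one_pow, one_mul]
  rw [← odious, ← hevil, hsum_odious, hsum_evil] at hsplit
  rw [← hsplit, neg_add, neg_neg, sub_eq_add_neg]

theorem exists_poly_of_powerSum_diff_general (f : ℝ[X]) (d k : ℕ) (hkd : k ≤ d)
    (hdeg : f.natDegree = d) :
    ∃ g : ℝ[X], g.natDegree = d - k ∧
      (∀ t : ℝ,
        (∑ x ∈ odious k, f.eval ((x : ℝ) + t)) - (∑ x ∈ evil k, f.eval ((x : ℝ) + t)) =
          g.eval t) ∧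
      g.leadingCoeff =
        (-1) ^ (k + 1) * f.leadingCoeff * (d.choose k) * (k.factorial : ℝ) *
          2 ^ (k * (k - 1) / 2) := by
  subst hdeg
  refine ⟨C ((-1) ^ (k + 1)) * dyadicDiff f k, ?_, fun t => ?_, ?_⟩
  · rw [natDegree_C_mul (pow_ne_zero _ (neg_ne_zero.2 one_ne_zero)), natDegree_dyadicDiff hkd]
  · rw [sum_odious_sub_sum_evil, sum_range_two_pow_neg_one_pow_digits_sum_mul_eval, eval_mul,
      eval_C, pow_succ]
    ring
  · rw [leadingCoeff_mul, leadingCoeff_C, leadingCoeff_dyadicDiff hkd,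
      Nat.descFactorial_eq_factorial_mul_choose, ← Nat.choose_two_right]
    push_cast
    ring

/-- For a polynomial `f` of degree `d ≥ k ≥ 1`, there is a polynomial `g` of degree `d - k`
with `∑_{x ∈ T_k} f(x+t) - ∑_{x ∈ T̄_k} f(x+t) = g(t)` for all `t`, whose leading coefficient
is `(-1)^(k+1) C binom(d,k) k! 2^(k(k-1)/2)`, where `C` is the leading coefficient of `f`. -/
theorem exists_poly_of_powerSum_diff (f : ℝ[X]) (d k : ℕ) (hk : 1 ≤ k) (hkd : k ≤ d)
    (hdeg : f.natDegree = d) :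
    ∃ g : ℝ[X], g.natDegree = d - k ∧
      (∀ t : ℝ,
        (∑ x ∈ odious k, f.eval ((x : ℝ) + t)) - (∑ x ∈ evil k, f.eval ((x : ℝ) + t)) =
          g.eval t) ∧
      g.leadingCoeff =
        (-1) ^ (k + 1) * f.leadingCoeff * (d.choose k) * (k.factorial : ℝ) *
          2 ^ (k * (k - 1) / 2) :=
  exists_poly_of_powerSum_diff_general f d k hkd hdeg
end

section
/- For any polynomial f of degree d ≥ 2, the number of distinct values of ∑_{i} f(λ_i), as λ = (λ_1, λ_2, …) ranges over all integer partitions of n, is Ω(n^{2(d−2)/3}) as n → ∞. -/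
/-!
Write `d = r + 2` and `g = f - f(1) X`. Completing parts `a_0, …, a_{2r+1}` by ones to a partition
of `n` gives the value `∑ g(a_i) + n f(1)`, so it suffices to count the values of `∑ g(a_i)`.
Take `a_i ∈ [m_i, 2 m_i)` with `m_i = t ^ e_i`, where the exponents `e_i` decrease geometrically
with ratio `(2r+1)/(2r+3) < (r+1)/(r+2)`. A jump of `g` on the `i`-th block has size
`≳ m_i ^ (r+1)`, which beats the total variation `≲ m_{i+1} ^ (r+2)` of `g` on all later blocks,
so `∑ g(a_i)` determines `a` lexicographically. This gives `t ^ (∑ e_i)` values as soon as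
`n ≳ t ^ e_0`, and summing the geometric series (with Bernoulli's inequality for the tail) shows
`3 ∑ e_i ≥ 2 r e_0`.
-/

open Polynomial Filter Finset

namespace Polynomial

lemma eventually_half_leadingCoeff_mul_pow_le_eval (p : ℝ[X]) (hp : 0 < p.leadingCoeff) :
    ∀ᶠ x in atTop, p.leadingCoeff / 2 * x ^ p.natDegree ≤ p.eval x := by
  filter_upwards [p.isEquivalent_atTop_lead.isLittleO.def (c := 1 / 2) one_half_pos,
    eventually_ge_atTop 0] with x hx hx0
  have hlead : 0 ≤ p.leadingCoeff * x ^ p.natDegree := by positivity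
  rw [Pi.sub_apply, Real.norm_eq_abs, Real.norm_eq_abs, abs_of_nonneg hlead] at hx
  linarith [neg_abs_le (p.eval x - p.leadingCoeff * x ^ p.natDegree)]

lemma exists_eventually_abs_eval_le (p : ℝ[X]) :
    ∃ C > 0, ∀ᶠ x in atTop, |p.eval x| ≤ C * x ^ p.natDegree := by
  obtain ⟨C, hC, hbound⟩ := (p.isBigO_atTop_of_degree_le (X ^ p.natDegree) (by
    rw [degree_X_pow]; exact degree_le_natDegree)).exists_pos
  refine ⟨C, hC, ?_⟩
  filter_upwards [hbound.bound, eventually_ge_atTop 0] with x hx hx0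
  simpa [abs_of_nonneg hx0] using hx

lemma exists_eventually_mul_pow_le_eval_sub (p : ℝ[X]) (hp : 0 < p.leadingCoeff)
    (hdeg : p.natDegree ≠ 0) :
    ∃ c > 0, ∀ᶠ x in atTop, ∀ y, x + 1 ≤ y → c * x ^ (p.natDegree - 1) ≤ p.eval y - p.eval x := by
  have hlead : 0 < p.derivative.leadingCoeff := by
    rw [leadingCoeff_derivative]
    exact mul_pos hp (by exact_mod_cast Nat.pos_of_ne_zero hdeg)
  refine ⟨p.derivative.leadingCoeff / 2, by positivity, ?_⟩
  obtain ⟨X, hX⟩ := eventually_atTop.1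
    (p.derivative.eventually_half_leadingCoeff_mul_pow_le_eval hlead)
  filter_upwards [eventually_ge_atTop X, eventually_ge_atTop 0] with x hxX hx0 y hxy
  obtain ⟨ξ, ⟨hxξ, -⟩, hslope⟩ := exists_hasDerivAt_eq_slope (p.eval ·) (p.derivative.eval ·)
    (a := x) (b := y) (by linarith) p.continuous.continuousOn (fun z _ => p.hasDerivAt z)
  rw [eq_div_iff (by linarith)] at hslope
  have hξ := hX ξ (by linarith)
  rw [natDegree_derivative] at hξ
  have hξ_nonneg : 0 ≤ p.derivative.eval ξ :=
    le_trans (mul_nonneg (by positivity) (pow_nonneg (by linarith) _)) hξ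
  calc p.derivative.leadingCoeff / 2 * x ^ (p.natDegree - 1)
      ≤ p.derivative.leadingCoeff / 2 * ξ ^ (p.natDegree - 1) := by gcongr
    _ ≤ p.derivative.eval ξ := hξ
    _ ≤ p.derivative.eval ξ * (y - x) := le_mul_of_one_le_right hξ_nonneg (by linarith)
    _ = p.eval y - p.eval x := hslope

lemma exists_eventually_mul_pow_le_abs_eval_sub (p : ℝ[X]) (hdeg : p.natDegree ≠ 0) :
    ∃ c > 0, ∀ᶠ x in atTop, ∀ y, x + 1 ≤ y →
      c * x ^ (p.natDegree - 1) ≤ |p.eval y - p.eval x| := by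
  have hp : p.leadingCoeff ≠ 0 := leadingCoeff_ne_zero.2 (by rintro rfl; simp at hdeg)
  rcases hp.lt_or_gt with hneg | hpos
  · obtain ⟨c, hc, h⟩ := (-p).exists_eventually_mul_pow_le_eval_sub (by simpa using hneg)
      (by simpa using hdeg)
    refine ⟨c, hc, h.mono fun x hx y hxy => ?_⟩
    have := hx y hxy
    rw [natDegree_neg, eval_neg, eval_neg, neg_sub_neg] at this
    exact this.trans (abs_sub_comm (p.eval y) _ ▸ le_abs_self _)
  · obtain ⟨c, hc, h⟩ := p.exists_eventually_mul_pow_le_eval_sub hpos hdeg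
    exact ⟨c, hc, h.mono fun x hx y hxy => (hx y hxy).trans (le_abs_self _)⟩

end Polynomial

section Separation

variable {ι : Type*} [Fintype ι] [LinearOrder ι] [LocallyFiniteOrderTop ι]

lemma Finset.sum_eq_add_sum_Ioi_of_eq_zero {α : Type*} [AddCommMonoid α] {u : ι → α} {i : ι}
    (h : ∀ j < i, u j = 0) :
    ∑ j, u j = u i + ∑ j ∈ Ioi i, u j := by
  rw [← sum_cons (s := Ioi i) (a := i) (by simp), ← Ici_eq_cons_Ioi]
  exact (sum_subset (subset_univ _) fun j _ hj => h j (by simpa using hj)).symm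

theorem injOn_sum_of_sum_Ioi_lt {α β : Type*} [AddCommGroup α] [LinearOrder α]
    [IsOrderedAddMonoid α] (g : ι → β → α) (s : ι → Set β) (δ ω : ι → α)
    (hgap : ∀ i, ∀ x ∈ s i, ∀ y ∈ s i, x ≠ y → δ i ≤ |g i x - g i y|)
    (hosc : ∀ i, ∀ x ∈ s i, ∀ y ∈ s i, |g i x - g i y| ≤ ω i)
    (hdom : ∀ i, ∑ j ∈ Ioi i, ω j < δ i) :
    Set.InjOn (fun a : ι → β => ∑ i, g i (a i)) (Set.univ.pi s) := by
  intro a ha b hb hab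
  by_contra hne
  obtain ⟨i, hi, hmin⟩ := exists_minimal_of_wellFoundedLT _ (Function.ne_iff.1 hne)
  have hsplit := sum_eq_add_sum_Ioi_of_eq_zero (u := fun j => g j (a j) - g j (b j)) (i := i)
    fun j hj => sub_eq_zero.2 <| congrArg _ <| by
      by_contra h; exact (hmin h hj.le).not_gt hj
  rw [sum_sub_distrib, sub_eq_zero.2 hab] at hsplit
  have hlater : |∑ j ∈ Ioi i, (g j (a j) - g j (b j))| ≤ ∑ j ∈ Ioi i, ω j :=
    (abs_sum_le_sum_abs _ _).trans <|
      sum_le_sum fun j _ => hosc j _ (ha j trivial) _ (hb j trivial)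
  have := hgap i _ (ha i trivial) _ (hb i trivial) hi
  rw [eq_neg_of_add_eq_zero_left hsplit.symm, abs_neg] at this
  exact (hdom i).not_ge (this.trans hlater)

lemma injOn_sum_Ico_two_mul (g : ℝ → ℝ) {c C X : ℝ} {D : ℕ} (hc : 0 ≤ c) (hC : 0 ≤ C)
    (hgap : ∀ x ≥ X, ∀ y, x + 1 ≤ y → c * x ^ D ≤ |g y - g x|)
    (hbd : ∀ x ≥ X, |g x| ≤ C * x ^ (D + 1)) (m : ι → ℕ) (hmX : ∀ i, X ≤ m i)
    (hdom : ∀ i, ∑ j ∈ Ioi i, 2 * C * (2 * (m j : ℝ)) ^ (D + 1) < c * (m i : ℝ) ^ D) :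
    Set.InjOn (fun a : ι → ℕ => ∑ i, g (a i))
      (Set.univ.pi fun i => Set.Ico (m i) (2 * m i)) := by
  refine injOn_sum_of_sum_Ioi_lt (fun _ (a : ℕ) => g a) _ _ _ ?_ ?_ hdom
  · rintro i x ⟨hmx, -⟩ y ⟨hmy, -⟩ hxy
    wlog hlt : x < y generalizing x y
    · rw [abs_sub_comm]; exact this y hmy x hmx hxy.symm (hxy.lt_or_gt.resolve_left hlt)
    have hmx' : (m i : ℝ) ≤ x := by exact_mod_cast hmx
    calc c * (m i : ℝ) ^ D ≤ c * (x : ℝ) ^ D := by gcongr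
      _ ≤ |g y - g x| := hgap x ((hmX i).trans hmx') y (by exact_mod_cast hlt)
      _ = |g x - g y| := abs_sub_comm _ _
  · rintro i x ⟨hmx, hx2⟩ y ⟨hmy, hy2⟩
    have bound : ∀ z : ℕ, m i ≤ z → z < 2 * m i → |g z| ≤ C * (2 * (m i : ℝ)) ^ (D + 1) :=
      fun z hmz hz2 => (hbd z ((hmX i).trans (by exact_mod_cast hmz))).trans <| by
        gcongr; exact_mod_cast hz2.le
    linarith [abs_sub (g x) (g y), bound x hmx hx2, bound y hmy hy2]

lemma sum_Ioi_lt_of_mul_add_one_le (e : ι → ℕ) {D : ℕ}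
    (he : ∀ i j, i < j → (D + 1) * e j + 1 ≤ D * e i) {c C t : ℝ} (hC : 0 ≤ C) (ht : 1 ≤ t)
    (htc : Fintype.card ι * 2 ^ (D + 2) * C < c * t) (i : ι) :
    ∑ j ∈ Ioi i, 2 * C * (2 * t ^ e j) ^ (D + 1) < c * (t ^ e i) ^ D := by
  have hterm : ∀ j ∈ Ioi i,
      t * (2 * C * (2 * t ^ e j) ^ (D + 1)) ≤ 2 ^ (D + 2) * C * t ^ (D * e i) := by
    intro j hj
    calc t * (2 * C * (2 * t ^ e j) ^ (D + 1)) = 2 ^ (D + 2) * C * t ^ ((D + 1) * e j + 1) := by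
          ring
      _ ≤ 2 ^ (D + 2) * C * t ^ (D * e i) := by
          gcongr
          exact he i j (mem_Ioi.1 hj)
  have hcard : ((Ioi i).card : ℝ) ≤ Fintype.card ι := by exact_mod_cast card_le_univ _
  have hsum := sum_le_card_nsmul _ _ _ hterm
  rw [← mul_sum, nsmul_eq_mul] at hsum
  have hpos : 0 < t ^ (D * e i) := by positivity
  rw [← pow_mul, mul_comm (e i)]
  nlinarith [mul_le_mul_of_nonneg_right hcard
    (by positivity : 0 ≤ 2 ^ (D + 2) * C * t ^ (D * e i))]

end Separation

lemma pow_mul_pow_sub_le_pow_mul_pow_sub {a b i j n : ℕ} (hab : a ≤ b) (hij : i ≤ j)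
    (hjn : j ≤ n) : a ^ j * b ^ (n - j) ≤ a ^ i * b ^ (n - i) := by
  obtain ⟨l, rfl⟩ := Nat.exists_eq_add_of_le hij
  calc a ^ (i + l) * b ^ (n - (i + l)) = a ^ i * (a ^ l * b ^ (n - (i + l))) := by ring
    _ ≤ a ^ i * (b ^ l * b ^ (n - (i + l))) := by gcongr
    _ = a ^ i * b ^ (n - i) := by rw [← pow_add]; congr 2; omega

/-- Used for `i < 2 * r + 2`; then `∑ i, blockExponent r i / blockExponent r 0` is close to
`(2r+3)/2`, comfortably above the target exponent `2r/3`. -/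
def blockExponent (r i : ℕ) : ℕ := (2 * r + 1) ^ i * (2 * r + 3) ^ (2 * r + 1 - i)

lemma blockExponent_pos (r i : ℕ) : 0 < blockExponent r i := by
  unfold blockExponent; positivity

lemma blockExponent_le_blockExponent_zero {r i : ℕ} (hi : i ≤ 2 * r + 1) :
    blockExponent r i ≤ blockExponent r 0 :=
  pow_mul_pow_sub_le_pow_mul_pow_sub (by omega) (Nat.zero_le i) hi

lemma add_two_mul_blockExponent_add_one_le {r i j : ℕ} (hij : i < j) (hj : j ≤ 2 * r + 1) :
    (r + 2) * blockExponent r j + 1 ≤ (r + 1) * blockExponent r i := by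
  have hmono : blockExponent r j ≤ blockExponent r (i + 1) :=
    pow_mul_pow_sub_le_pow_mul_pow_sub (by omega) hij hj
  obtain ⟨l, hl⟩ : ∃ l, 2 * r + 1 - i = l + 1 := ⟨2 * r - i, by omega⟩
  have hl' : 2 * r + 1 - (i + 1) = l := by omega
  -- `(r + 1) * (2 * r + 3) = (r + 2) * (2 * r + 1) + 1`
  have hstep : (r + 2) * blockExponent r (i + 1) + (2 * r + 1) ^ i * (2 * r + 3) ^ l
      = (r + 1) * blockExponent r i := by
    simp only [blockExponent, hl, hl']; ring
  have hpos : 0 < (2 * r + 1) ^ i * (2 * r + 3) ^ l := by positivity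
  nlinarith

lemma two_mul_mul_blockExponent_zero_le (r : ℕ) :
    2 * r * blockExponent r 0 ≤ 3 * ∑ i ∈ range (2 * r + 2), blockExponent r i := by
  obtain ⟨E, hE⟩ : ∃ E, 2 * r + 1 = E := ⟨_, rfl⟩
  have hgeom :
      (∑ i ∈ range (E + 1), blockExponent r i) * 2 + E ^ (E + 1) = (2 + E) ^ (E + 1) := by
    rw [← geom_sum₂_mul_add 2 E (E + 1), geom_sum₂_comm]
    congr 2
    refine sum_congr rfl fun i _ => ?_
    rw [blockExponent, show 2 * r + 3 = 2 + E by omega, hE, Nat.add_sub_cancel, mul_comm]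
  have hbernoulli : E ^ E + E * E ^ (E - 1) * 2 ≤ (E + 2) ^ E :=
    pow_add_mul_le_add_pow (Nat.zero_le _) (Nat.zero_le _) E
  rw [← pow_succ', Nat.sub_add_cancel (by omega : 1 ≤ E)] at hbernoulli
  rw [pow_succ', pow_succ', add_comm 2 E] at hgeom
  have hzero : blockExponent r 0 = (E + 2) ^ E := by
    rw [blockExponent, show 2 * r + 3 = E + 2 by omega, hE, Nat.sub_zero, pow_zero, one_mul]
  rw [hzero, show 2 * r + 2 = E + 1 by omega]
  nlinarith [Nat.mul_le_mul_left E hbernoulli]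

def partitionValues (f : ℝ[X]) (n : ℕ) : Set ℝ :=
  {y : ℝ | ∃ p : n.Partition, y = (p.parts.map (fun i => f.eval (i : ℝ))).sum}

lemma partitionValues_finite (f : ℝ[X]) (n : ℕ) : (partitionValues f n).Finite :=
  (Set.finite_range fun p : n.Partition => (p.parts.map (fun i => f.eval (i : ℝ))).sum).subset
    fun _ ⟨p, hp⟩ => ⟨p, hp.symm⟩

lemma sum_eval_add_mem_partitionValues (f : ℝ[X]) {ι : Type*} [Fintype ι] {n : ℕ} (a : ι → ℕ)
    (ha : ∀ i, 0 < a i) (hn : ∑ i, a i ≤ n) :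
    ∑ i, (f - C (f.eval 1) * X).eval (a i : ℝ) + n * f.eval 1 ∈ partitionValues f n := by
  let p : n.Partition :=
    { parts := univ.val.map a + Multiset.replicate (n - ∑ i, a i) 1
      parts_pos := by
        simp only [Multiset.mem_add, Multiset.mem_map, Multiset.mem_replicate]
        rintro _ (⟨i, -, rfl⟩ | ⟨-, rfl⟩)
        exacts [ha i, one_pos]
      parts_sum := by
        rw [Multiset.sum_add, Multiset.sum_replicate, smul_eq_mul, mul_one]
        exact Nat.add_sub_of_le hn }
  refine ⟨p, ?_⟩
  simp only [p, Multiset.pure_def, Multiset.bind_def, Multiset.bind_singleton, Multiset.map_map,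
    Function.comp_apply, Multiset.map_add, Multiset.sum_add, Multiset.map_replicate,
    Multiset.sum_replicate, nsmul_eq_mul, Nat.cast_sub hn, Nat.cast_sum, Nat.cast_one, eval_sub,
    eval_mul, eval_C, eval_X, sum_sub_distrib, ← mul_sum, sum_map_val]
  ring

lemma exists_mul_rpow_le_of_eventually_pow_le (F : ℕ → ℝ) {K Q S : ℕ} {β : ℝ} (hK : 0 < K)
    (hQ : 0 < Q) (hβ : 0 ≤ β) (hQS : Q * β ≤ S)
    (hF : ∀ᶠ t : ℕ in atTop, ∀ n ≥ K * t ^ Q, (t : ℝ) ^ S ≤ F n) :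
    ∃ c : ℝ, 0 < c ∧ ∃ N : ℕ, ∀ n ≥ N, c * (n : ℝ) ^ β ≤ F n := by
  obtain ⟨T, hT⟩ := eventually_atTop.1 (hF.and (eventually_ge_atTop 1))
  set A : ℝ := ((K * 2 ^ Q : ℕ) : ℝ) ^ β
  have hA : 0 < A := by positivity
  refine ⟨A⁻¹, inv_pos.2 hA, K * T ^ Q, fun n hn => ?_⟩
  have hex : ∃ t, n < K * (t + 1) ^ Q :=
    ⟨n, (Nat.lt_succ_self n).trans_le <|
      (Nat.le_self_pow hQ.ne' _).trans (Nat.le_mul_of_pos_left _ hK)⟩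
  set t := Nat.find hex
  have hupper : n < K * (t + 1) ^ Q := Nat.find_spec hex
  have hTt : T ≤ t := by
    by_contra! h
    exact (hupper.trans_le (by gcongr; omega)).not_ge hn
  obtain ⟨hFt, ht1⟩ := hT t hTt
  have hlower : K * t ^ Q ≤ n := by
    have := Nat.find_min hex (m := t - 1) (by omega)
    rwa [Nat.sub_add_cancel ht1, not_lt] at this
  have hn_le : (n : ℝ) ≤ (K * 2 ^ Q : ℕ) * (t : ℝ) ^ Q := by
    have : K * (t + 1) ^ Q ≤ K * 2 ^ Q * t ^ Q := by
      rw [mul_assoc, ← mul_pow]; gcongr; omega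
    exact_mod_cast hupper.le.trans this
  have ht : (1 : ℝ) ≤ t := by exact_mod_cast ht1
  rw [inv_mul_le_iff₀ hA]
  calc (n : ℝ) ^ β ≤ ((K * 2 ^ Q : ℕ) * (t : ℝ) ^ Q) ^ β := by gcongr
    _ = A * (t : ℝ) ^ (Q * β) := by
      rw [Real.mul_rpow (by positivity) (by positivity), ← Real.rpow_natCast,
        ← Real.rpow_mul (by positivity)]
    _ ≤ A * (t : ℝ) ^ (S : ℝ) := by gcongr
    _ ≤ A * F n := by rw [Real.rpow_natCast]; gcongr; exact hFt n hlower

lemma prod_le_ncard_partitionValues (f : ℝ[X]) {ι : Type*} [Fintype ι] [DecidableEq ι] {n : ℕ}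
    (m : ι → ℕ) (hm : ∀ i, 0 < m i) (hn : ∑ i, 2 * m i ≤ n)
    (hinj : Set.InjOn (fun a : ι → ℕ => ∑ i, (f - C (f.eval 1) * X).eval (a i : ℝ))
      (Set.univ.pi fun i => Set.Ico (m i) (2 * m i))) :
    ∏ i, m i ≤ (partitionValues f n).ncard := by
  set box := Fintype.piFinset fun i => Finset.Ico (m i) (2 * m i)
  have hbox : (box : Set (ι → ℕ)) = Set.univ.pi fun i => Set.Ico (m i) (2 * m i) := by
    simp [box, Fintype.coe_piFinset]
  set F := fun a : ι → ℕ => ∑ i, (f - C (f.eval 1) * X).eval (a i : ℝ) + n * f.eval 1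
  have hmaps : F '' box ⊆ partitionValues f n := by
    rintro _ ⟨a, ha, rfl⟩
    rw [hbox] at ha
    exact sum_eval_add_mem_partitionValues f a (fun i => (hm i).trans_le (ha i trivial).1)
      ((sum_le_sum fun i _ => (ha i trivial).2.le).trans hn)
  calc ∏ i, m i = box.card := by simp [box, Fintype.card_piFinset, two_mul]
    _ = (F '' box).ncard := by
      rw [Set.InjOn.ncard_image (hbox ▸ fun a ha b hb hab => hinj ha hb (add_right_cancel hab)),
        Set.ncard_coe_finset]
    _ ≤ (partitionValues f n).ncard := Set.ncard_le_ncard hmaps (partitionValues_finite f n)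

theorem eventually_pow_le_ncard_partitionValues (f : ℝ[X]) (r : ℕ)
    (hdeg : f.natDegree = r + 2) :
    ∀ᶠ t : ℕ in atTop, ∀ n ≥ (4 * r + 4) * t ^ blockExponent r 0,
      (t : ℝ) ^ (∑ i ∈ range (2 * r + 2), blockExponent r i) ≤ (partitionValues f n).ncard := by
  set g := f - C (f.eval 1) * X
  have hg : g.natDegree = r + 2 := by
    rw [natDegree_sub_eq_left_of_natDegree_lt, hdeg]
    exact ((natDegree_C_mul_le _ _).trans natDegree_X_le).trans_lt (by omega)
  obtain ⟨c, hc, hgap⟩ := g.exists_eventually_mul_pow_le_abs_eval_sub (by omega)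
  obtain ⟨C, hC, hbd⟩ := g.exists_eventually_abs_eval_le
  rw [hg, show r + 2 - 1 = r + 1 by omega] at hgap
  rw [hg] at hbd
  obtain ⟨X, hX⟩ := eventually_atTop.1 (hgap.and hbd)
  filter_upwards [eventually_ge_atTop ⌈X⌉₊, eventually_ge_atTop 1,
    (tendsto_natCast_atTop_atTop.const_mul_atTop hc).eventually_gt_atTop
      ((2 * r + 2 : ℕ) * 2 ^ (r + 1 + 2) * C)] with t htX ht1 htc n hn
  set e : Fin (2 * r + 2) → ℕ := fun i => blockExponent r i
  set m : Fin (2 * r + 2) → ℕ := fun i => t ^ e i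
  have hmX : ∀ i, X ≤ m i := fun i => (Nat.le_ceil X).trans <| by
    exact_mod_cast htX.trans (Nat.le_self_pow (blockExponent_pos r i).ne' t)
  have hdom := sum_Ioi_lt_of_mul_add_one_le e (D := r + 1)
    (fun i j hij => add_two_mul_blockExponent_add_one_le hij (by omega)) hC.le
    (t := t) (by exact_mod_cast ht1) (by simpa using htc)
  have hinj := injOn_sum_Ico_two_mul (g.eval ·) hc.le hC.le (fun x hx => (hX x hx).1)
    (fun x hx => (hX x hx).2) m hmX (by simpa [m] using hdom)
  have hsum : ∑ i, 2 * m i ≤ n := calc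
    ∑ i, 2 * m i ≤ ∑ _i : Fin (2 * r + 2), 2 * t ^ blockExponent r 0 :=
      sum_le_sum fun i _ => Nat.mul_le_mul_left 2 <|
        Nat.pow_le_pow_right ht1 (blockExponent_le_blockExponent_zero (by omega))
    _ = (4 * r + 4) * t ^ blockExponent r 0 := by
      rw [sum_const, card_univ, Fintype.card_fin, smul_eq_mul]; ring
    _ ≤ n := hn
  calc (t : ℝ) ^ (∑ i ∈ range (2 * r + 2), blockExponent r i) = ((∏ i, m i : ℕ) : ℝ) := by
        rw [← Fin.sum_univ_eq_sum_range, Nat.cast_prod]; simp [m, e, prod_pow_eq_pow_sum]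
    _ ≤ (partitionValues f n).ncard := by
      exact_mod_cast prod_le_ncard_partitionValues f m (fun i => by positivity) hsum hinj

/-- For any polynomial `f` of degree `d ≥ 2`, the number of distinct values of
`f(λ) = ∑_i f(λ_i)` over integer partitions `λ ⊢ n` is `Ω(n^(2(d-2)/3))` as `n → ∞`. -/
theorem card_poly_partition_values (f : ℝ[X]) (d : ℕ) (hd : 2 ≤ d) (hdeg : f.natDegree = d) :
    ∃ c : ℝ, 0 < c ∧ ∃ N : ℕ, ∀ n ≥ N,
      c * (n : ℝ) ^ ((2 * ((d : ℝ) - 2)) / 3) ≤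
        ({y : ℝ | ∃ p : n.Partition,
            y = (p.parts.map (fun i => f.eval (i : ℝ))).sum}.ncard : ℝ) := by
  obtain ⟨r, rfl⟩ : ∃ r, d = r + 2 := ⟨d - 2, by omega⟩
  have hexp : (blockExponent r 0 : ℝ) * (2 * (((r + 2 : ℕ) : ℝ) - 2) / 3)
      ≤ (∑ i ∈ range (2 * r + 2), blockExponent r i : ℕ) := by
    have : (2 * r * blockExponent r 0 : ℝ) ≤ 3 * ∑ i ∈ range (2 * r + 2), blockExponent r i := by
      exact_mod_cast two_mul_mul_blockExponent_zero_le r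
    push_cast at this ⊢
    linarith
  exact exists_mul_rpow_le_of_eventually_pow_le _ (by omega) (blockExponent_pos r 0)
    (by rw [Nat.cast_add, Nat.cast_ofNat, add_sub_cancel_right]; positivity) hexp
    (eventually_pow_le_ncard_partitionValues f r hdeg)
end
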